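/- arXiv:math/0510285 — 3 statements merged into one kernel-verified Lean document; each statement's English description precedes it below -/
import Mathlib

section
/- Let Q(z) = Σ_{β} a_β z^{ρ-β} where the sum ranges over multi-indices β ∈ ℕ^4 with |β| ≤ 3, and ρ ∈ ℕ^4 is a fixed multi-index with each component ρ_i ≥ 3. If all partial derivatives of Q of order at most 3 vanish at z_0 = (1,1,1,1), then the polynomial P(z) = Σ_β a_β z^β vanishes at z_0 together with all its partial derivatives of order at most 3, and hence P ≡ 0 and all a_β = 0. -/
open MvPolynomial

/-- Iterated partial derivative `∂^γ` of a multivariate polynomial in 4 variables. -/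
noncomputable def pderivPow (γ : Fin 4 → ℕ) (P : MvPolynomial (Fin 4) ℂ) :
    MvPolynomial (Fin 4) ℂ :=
  ((pderiv (0 : Fin 4))^[γ 0] ∘ (pderiv (1 : Fin 4))^[γ 1] ∘
   (pderiv (2 : Fin 4))^[γ 2] ∘ (pderiv (3 : Fin 4))^[γ 3]) P

/-- The finite set of multi-indices `β ∈ ℕ⁴` with `|β| ≤ 3`, realized inside `Fin 4 → Fin 4`. -/
noncomputable def idx3 : Finset (Fin 4 → Fin 4) :=
  Finset.univ.filter (fun β => (∑ i, (β i : ℕ)) ≤ 3)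

open Finset

/- ## Auxiliary lemmas -/

lemma df_cast (n k : ℕ) : ((n.descFactorial k : ℕ) : ℂ) = ∏ j ∈ Finset.range k, ((n:ℂ) - j) := by
  induction k with
  | zero => simp
  | succ k ih =>
    rw [Nat.descFactorial_succ, Finset.prod_range_succ, ← ih]
    by_cases h : k ≤ n
    · push_cast [h]; ring
    · have hn : n < k := by omega
      have h1 : n.descFactorial k = 0 := Nat.descFactorial_eq_zero_iff_lt.mpr hn
      have h2 : n - k = 0 := by omega
      simp [h1, h2]

lemma iter_pd (i : Fin 4) (g : ℕ) : ∀ (s : Fin 4 →₀ ℕ) (c : ℂ),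
    (pderiv i)^[g] (monomial s c) = monomial (s - Finsupp.single i g) (c * (s i).descFactorial g) := by
  induction g with
  | zero => intro s c; simp
  | succ g ih =>
    intro s c
    rw [Function.iterate_succ_apply, pderiv_monomial, ih]
    congr 1
    · rw [tsub_tsub, ← Finsupp.single_add, Nat.add_comm]
    · rw [Finsupp.tsub_apply, Finsupp.single_eq_same]
      have : (s i) * (s i - 1).descFactorial g = (s i).descFactorial (g+1) := by
        cases hsi : s i with
        | zero => simp
        | succ m => rw [Nat.succ_descFactorial_succ]; simp
      rw [mul_assoc, ← Nat.cast_mul, this]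

lemma iter_pd_sum (i : Fin 4) (g : ℕ) {ι : Type*} (s : Finset ι) (f : ι → MvPolynomial (Fin 4) ℂ) :
    (pderiv i)^[g] (∑ x ∈ s, f x) = ∑ x ∈ s, (pderiv i)^[g] (f x) := by
  induction g with
  | zero => simp
  | succ g ih => simp only [Function.iterate_succ_apply', ih, map_sum]

lemma pderivPow_sum (γ : Fin 4 → ℕ) {ι : Type*} (s : Finset ι) (f : ι → MvPolynomial (Fin 4) ℂ) :
    pderivPow γ (∑ x ∈ s, f x) = ∑ x ∈ s, pderivPow γ (f x) := by
  unfold pderivPow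
  simp only [Function.comp_apply, iter_pd_sum]

lemma pderivPow_zero (γ : Fin 4 → ℕ) : pderivPow γ (0 : MvPolynomial (Fin 4) ℂ) = 0 := by
  unfold pderivPow
  simp only [Function.comp_apply]
  rw [Function.iterate_fixed (map_zero _) _, Function.iterate_fixed (map_zero _) _,
    Function.iterate_fixed (map_zero _) _, Function.iterate_fixed (map_zero _) _]

lemma hm_mono (e : Fin 4 → ℕ) (c : ℂ) :
    C c * ∏ i, (X i : MvPolynomial (Fin 4) ℂ) ^ e i = monomial (Finsupp.equivFunOnFinite.symm e) c := by
  rw [monomial_eq, Finsupp.prod_fintype _ _ (fun i => pow_zero _)]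
  simp

lemma pm (γ : Fin 4 → ℕ) (s : Fin 4 →₀ ℕ) (c : ℂ) :
    eval (fun _ => (1:ℂ)) (pderivPow γ (monomial s c))
      = c * ∏ i, ((s i).descFactorial (γ i) : ℂ) := by
  unfold pderivPow
  simp only [Function.comp_apply]
  rw [iter_pd, iter_pd, iter_pd, iter_pd, eval_monomial]
  have h1 : ∀ (t : Fin 4 →₀ ℕ) (j : Fin 4) (g : ℕ) (i : Fin 4), i ≠ j →
      (t - Finsupp.single j g) i = t i := by
    intro t j g i hij
    rw [Finsupp.tsub_apply, Finsupp.single_apply, if_neg (by simpa using hij.symm)]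
    simp
  rw [h1 _ _ _ 2 (by decide), h1 _ _ _ 1 (by decide), h1 _ _ _ 1 (by decide),
      h1 _ _ _ 0 (by decide), h1 _ _ _ 0 (by decide), h1 _ _ _ 0 (by decide)]
  rw [Fin.prod_univ_four]
  simp only [Finsupp.prod, one_pow, Finset.prod_const_one, mul_one]
  ring

noncomputable def sp (g : ℕ) : Polynomial ℂ := ∏ j ∈ range g, (Polynomial.X - Polynomial.C (j:ℂ))

lemma sp_monic (g : ℕ) : (sp g).Monic :=
  Polynomial.monic_prod_of_monic _ _ (fun _ _ => Polynomial.monic_X_sub_C _)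

lemma sp_natDegree (g : ℕ) : (sp g).natDegree = g := by
  rw [sp, Polynomial.natDegree_prod]
  · rw [Finset.sum_congr rfl (fun x _ => Polynomial.natDegree_X_sub_C ((x:ℕ):ℂ))]
    simp
  · intro j _
    exact (Polynomial.monic_X_sub_C _).ne_zero

lemma tdeg_aeval (i : Fin 4) (r : Polynomial ℂ) :
    (Polynomial.aeval (X i : MvPolynomial (Fin 4) ℂ) r).totalDegree ≤ r.natDegree := by
  rw [Polynomial.aeval_eq_sum_range]
  refine le_trans (totalDegree_finset_sum _ _) ?_
  apply Finset.sup_le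
  intro k hk
  refine le_trans (totalDegree_smul_le _ _) ?_
  rw [totalDegree_X_pow]
  have := Finset.mem_range.mp hk
  omega

lemma tp_bound (i : Fin 4) (g : ℕ) :
    (Polynomial.aeval (X i : MvPolynomial (Fin 4) ℂ) (sp g - Polynomial.X ^ g)).totalDegree ≤ g - 1 := by
  cases g with
  | zero =>
    have h0 : sp 0 - Polynomial.X ^ 0 = (0 : Polynomial ℂ) := by simp [sp]
    rw [h0, map_zero]
    simp
  | succ g =>
    by_cases h : sp (g+1) - Polynomial.X ^ (g+1) = 0
    · rw [h, map_zero]; simp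
    · refine le_trans (tdeg_aeval _ _) ?_
      have hd : (sp (g+1) - Polynomial.X ^ (g+1)).degree < ((g+1 : ℕ) : WithBot ℕ) := by
        have hdeg : (sp (g+1)).degree = ((g+1 : ℕ) : WithBot ℕ) := by
          rw [Polynomial.degree_eq_natDegree (sp_monic (g+1)).ne_zero, sp_natDegree]
        have := Polynomial.degree_sub_lt (p := sp (g+1)) (q := Polynomial.X ^ (g+1))
          (by rw [hdeg, Polynomial.degree_X_pow]) (sp_monic (g+1)).ne_zero
          (by rw [(sp_monic (g+1)).leadingCoeff, Polynomial.leadingCoeff_X_pow])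
        rwa [hdeg] at this
      have := (Polynomial.natDegree_lt_iff_degree_lt h).mpr hd
      omega

noncomputable def qpoly (e : Fin 4 → ℕ) : MvPolynomial (Fin 4) ℂ :=
  ∏ i, ∏ j ∈ range (e i), (X i - C (j:ℂ))

lemma qpoly_eq (e : Fin 4 → ℕ) :
    qpoly e = ∏ i, Polynomial.aeval (X i : MvPolynomial (Fin 4) ℂ) (sp (e i)) := by
  unfold qpoly sp
  refine Finset.prod_congr rfl (fun i _ => ?_)
  rw [map_prod]
  refine Finset.prod_congr rfl (fun j _ => ?_)
  simp [Polynomial.aeval_C, algebraMap_eq]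

lemma qb (e : Fin 4 → ℕ) (he : 0 < ∑ i, e i) :
    (qpoly e - ∏ i, (X i : MvPolynomial (Fin 4) ℂ) ^ e i).totalDegree < ∑ i, e i := by
  set B : Fin 4 → MvPolynomial (Fin 4) ℂ :=
    fun i => Polynomial.aeval (X i) (sp (e i) - Polynomial.X ^ (e i)) with hB
  have hA : ∀ i, Polynomial.aeval (X i : MvPolynomial (Fin 4) ℂ) (sp (e i))
      = X i ^ e i + B i := by
    intro i
    rw [hB]
    simp only [map_sub, map_pow, Polynomial.aeval_X]
    ring
  rw [qpoly_eq]
  rw [Finset.prod_congr rfl (fun i _ => hA i), Finset.prod_add]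
  rw [← Finset.add_sum_erase _ _ (Finset.mem_powerset.mpr (Finset.subset_univ (Finset.univ : Finset (Fin 4))))]
  simp only [Finset.sdiff_self, Finset.prod_empty, mul_one, Finset.sum_empty]
  rw [add_sub_cancel_left]
  refine lt_of_le_of_lt (totalDegree_finset_sum _ _) ?_
  rw [Finset.sup_lt_iff (by simpa using he)]
  intro t ht
  obtain ⟨htne, htp⟩ := Finset.mem_erase.mp ht
  have htsub : t ⊆ Finset.univ := Finset.mem_powerset.mp htp
  by_cases hz : ∃ i ∈ Finset.univ \ t, e i = 0
  · obtain ⟨i, hi, hei⟩ := hz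
    have hBi : B i = 0 := by
      rw [hB]
      simp only [hei, pow_zero]
      have : sp 0 - (1 : Polynomial ℂ) = 0 := by simp [sp]
      rw [this, map_zero]
    rw [Finset.prod_eq_zero hi hBi, mul_zero]
    simpa using he
  · push_neg at hz
    have hne : (Finset.univ \ t).Nonempty := by
      rw [Finset.sdiff_nonempty]
      intro hsub
      exact htne (Finset.univ_subset_iff.mp hsub)
    have h1 : (∏ i ∈ t, (X i : MvPolynomial (Fin 4) ℂ) ^ e i).totalDegree ≤ ∑ i ∈ t, e i := by
      refine le_trans (totalDegree_finset_prod _ _) ?_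
      exact Finset.sum_le_sum (fun i _ => le_of_eq (totalDegree_X_pow _ _))
    have h2 : (∏ i ∈ Finset.univ \ t, B i).totalDegree ≤ ∑ i ∈ Finset.univ \ t, (e i - 1) := by
      refine le_trans (totalDegree_finset_prod _ _) ?_
      exact Finset.sum_le_sum (fun i _ => tp_bound i (e i))
    have h3 : ∑ i ∈ Finset.univ \ t, (e i - 1) < ∑ i ∈ Finset.univ \ t, e i := by
      refine Finset.sum_lt_sum_of_nonempty hne (fun i hi => ?_)
      have := hz i hi
      omega
    have h4 : ∑ i ∈ Finset.univ \ t, e i + ∑ i ∈ t, e i = ∑ i, e i :=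
      Finset.sum_sdiff htsub
    refine lt_of_le_of_lt (totalDegree_mul _ _) ?_
    omega

lemma natkey (b c : Fin 4 → ℕ) (hb : (∑ i, b i) ≤ 3) (hc : (∑ i, c i) ≤ 3) :
    (∏ i, (b i).descFactorial (c i)) * ((3 - ∑ i, b i).descFactorial (3 - ∑ i, c i))
      = if b = c then (∏ i, (c i).factorial) * (3 - ∑ i, c i).factorial else 0 := by
  by_cases h : b = c
  · subst h
    rw [if_pos rfl, Nat.descFactorial_self]
    congr 1
    exact Finset.prod_congr rfl (fun i _ => Nat.descFactorial_self _)
  · rw [if_neg h]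
    by_cases hel : ∀ i, c i ≤ b i
    · have hlt : ∑ i, c i < ∑ i, b i := by
        refine Finset.sum_lt_sum (fun i _ => hel i) ?_
        by_contra hco
        push_neg at hco
        exact h (funext fun i => le_antisymm (hco i (Finset.mem_univ i)) (hel i))
      have : 3 - ∑ i, b i < 3 - ∑ i, c i := by omega
      rw [Nat.descFactorial_eq_zero_iff_lt.mpr this, mul_zero]
    · push_neg at hel
      obtain ⟨i, hi⟩ := hel
      rw [Finset.prod_eq_zero (Finset.mem_univ i)
        (Nat.descFactorial_eq_zero_iff_lt.mpr hi), zero_mul]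

lemma lin_deg (a : ℂ) (i : Fin 4) : (C a - X i : MvPolynomial (Fin 4) ℂ).totalDegree ≤ 1 := by
  rw [sub_eq_add_neg]
  refine le_trans (totalDegree_add _ _) ?_
  simp [totalDegree_C, totalDegree_neg, totalDegree_X]

lemma sub_deg (x : ℂ) (S : MvPolynomial (Fin 4) ℂ) (h : S.totalDegree ≤ 1) :
    (C x - S).totalDegree ≤ 1 := by
  rw [sub_eq_add_neg]
  refine le_trans (totalDegree_add _ _) ?_
  simp only [totalDegree_C, totalDegree_neg]
  omega

/-- Let `Q(z) = Σ_{|β|≤3} a_β z^{ρ-β}` with `ρ_i ≥ 3` for all `i`.  If all partial derivatives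
of `Q` of order at most 3 vanish at `z₀ = (1,1,1,1)`, then `P(z) = Σ_β a_β z^β` vanishes at
`z₀` together with all its partial derivatives of order at most 3, hence `P ≡ 0` and all
`a_β = 0`. -/
theorem stmt1 (ρ : Fin 4 → ℕ) (hρ : ∀ i, 3 ≤ ρ i) (a : (Fin 4 → ℕ) → ℂ)
    (Q P : MvPolynomial (Fin 4) ℂ)
    (hQ : Q = ∑ β ∈ idx3, C (a fun i => (β i : ℕ)) * ∏ i, (X i) ^ (ρ i - (β i : ℕ)))
    (hP : P = ∑ β ∈ idx3, C (a fun i => (β i : ℕ)) * ∏ i, (X i) ^ ((β i : ℕ)))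
    (hvanish : ∀ γ : Fin 4 → ℕ, (∑ i, γ i) ≤ 3 →
      eval (fun _ => (1 : ℂ)) (pderivPow γ Q) = 0) :
    (∀ γ : Fin 4 → ℕ, (∑ i, γ i) ≤ 3 →
      eval (fun _ => (1 : ℂ)) (pderivPow γ P) = 0) ∧
    P = 0 ∧ (∀ β : Fin 4 → ℕ, (∑ i, β i) ≤ 3 → a β = 0) := by
  set A : (Fin 4 → Fin 4) → ℂ := fun β => a (fun i => (β i : ℕ)) with hA
  set w : (Fin 4 → Fin 4) → Fin 4 → ℂ := fun β i => ((ρ i : ℂ) - ((β i : ℕ) : ℂ)) with hw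
  have hmem : ∀ β ∈ idx3, (∑ i, (β i : ℕ)) ≤ 3 := by
    intro β hβ
    exact (Finset.mem_filter.mp hβ).2
  -- Step 1: the descFactorial identities from hvanish
  have star : ∀ γ : Fin 4 → ℕ, (∑ i, γ i) ≤ 3 →
      ∑ β ∈ idx3, A β * ∏ i, (((ρ i - (β i : ℕ)).descFactorial (γ i) : ℕ) : ℂ) = 0 := by
    intro γ hγ
    have h0 := hvanish γ hγ
    rw [hQ] at h0
    rw [Finset.sum_congr rfl (fun β _ => hm_mono (fun i => ρ i - (β i : ℕ)) _)] at h0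
    rw [pderivPow_sum, map_sum] at h0
    rw [Finset.sum_congr rfl (fun β _ => pm γ _ _)] at h0
    simpa using h0
  -- Step 2: evaluation of qpoly at the points w β
  have evalq : ∀ (β : Fin 4 → Fin 4) (e : Fin 4 → ℕ),
      eval (w β) (qpoly e) = ∏ i, (((ρ i - (β i : ℕ)).descFactorial (e i) : ℕ) : ℂ) := by
    intro β e
    unfold qpoly
    rw [map_prod]
    refine Finset.prod_congr rfl fun i _ => ?_
    have hble : ((β i : ℕ)) ≤ ρ i := le_trans (by omega) (hρ i)
    have hcast : ((ρ i - (β i : ℕ) : ℕ) : ℂ) = (ρ i : ℂ) - ((β i : ℕ) : ℂ) := by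
      push_cast [hble]
      ring
    rw [map_prod, df_cast]
    refine Finset.prod_congr rfl fun j _ => ?_
    simp only [map_sub, eval_X, eval_C, hw, hcast]
  -- Step 3: the main induction: all polys of low degree are "orthogonal" to A at the points w
  have key : ∀ n, ∀ p : MvPolynomial (Fin 4) ℂ, n ≤ 3 → p.totalDegree ≤ n →
      ∑ β ∈ idx3, A β * eval (w β) p = 0 := by
    intro n
    induction n using Nat.strong_induction_on with
    | _ n ih =>
      intro p hn hp
      conv_lhs => rw [p.as_sum]
      rw [Finset.sum_congr rfl (fun β _ => by rw [map_sum, Finset.mul_sum])]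
      rw [Finset.sum_comm]
      refine Finset.sum_eq_zero fun e he => ?_
      have hesum : (∑ i, e i) ≤ n := by
        have h1 := le_totalDegree he
        have h2 : (e.sum fun _ k => k) = ∑ i, e i := Finsupp.sum_fintype _ _ (fun _ => rfl)
        omega
      set c := coeff e p with hc
      set ef : Fin 4 → ℕ := fun i => e i with hef
      have hef2 : Finsupp.equivFunOnFinite.symm ef = e := by
        ext i
        simp [hef]
      have hmon : (monomial e c : MvPolynomial (Fin 4) ℂ) = C c * ∏ i, X i ^ ef i := by
        rw [hm_mono, hef2]
      have hsplit : ∀ β : Fin 4 → Fin 4, eval (w β) (monomial e c)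
          = c * (eval (w β) (qpoly ef) - eval (w β) (qpoly ef - ∏ i, X i ^ ef i)) := by
        intro β
        rw [hmon, map_mul, eval_C, map_sub]
        ring
      rw [Finset.sum_congr rfl (fun β _ => by rw [hsplit β])]
      have hcollect : ∑ β ∈ idx3, A β * (c * (eval (w β) (qpoly ef)
            - eval (w β) (qpoly ef - ∏ i, X i ^ ef i)))
          = c * ((∑ β ∈ idx3, A β * eval (w β) (qpoly ef))
            - (∑ β ∈ idx3, A β * eval (w β) (qpoly ef - ∏ i, X i ^ ef i))) := by
        rw [← Finset.sum_sub_distrib, Finset.mul_sum]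
        refine Finset.sum_congr rfl fun β _ => ?_
        ring
      have hq : ∑ β ∈ idx3, A β * eval (w β) (qpoly ef) = 0 := by
        rw [Finset.sum_congr rfl (fun β _ => by rw [evalq])]
        exact star ef (le_trans hesum hn)
      have hr : ∑ β ∈ idx3, A β * eval (w β) (qpoly ef - ∏ i, X i ^ ef i) = 0 := by
        by_cases h0 : ∑ i, ef i = 0
        · have hz : ∀ i, ef i = 0 := by
            intro i
            have := (Finset.sum_eq_zero_iff).mp h0 i (Finset.mem_univ i)
            exact this
          have : qpoly ef - ∏ i, X i ^ ef i = 0 := by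
            unfold qpoly
            simp [hz]
          rw [this]
          simp
        · have hpos : 0 < ∑ i, ef i := Nat.pos_of_ne_zero h0
          have hlt := qb ef hpos
          have hesum2 : (∑ i, ef i) ≤ n := by
            refine le_trans (le_of_eq ?_) hesum
            rfl
          exact ih ((qpoly ef - ∏ i, X i ^ ef i).totalDegree)
            (lt_of_lt_of_le hlt hesum2) _ (by omega) le_rfl
      rw [hcollect, hq, hr]
      ring
  -- Step 4: Lagrange interpolation gives vanishing of the coefficients
  have G3 : ∀ β' : Fin 4 → ℕ, (∑ i, β' i) ≤ 3 → a β' = 0 := by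
    intro β' hβ'
    have hlt : ∀ i, β' i < 4 := by
      intro i
      have := Finset.single_le_sum (f := β') (fun i _ => Nat.zero_le _) (Finset.mem_univ i)
      omega
    set β'' : Fin 4 → Fin 4 := fun i => ⟨β' i, hlt i⟩ with hβ''
    have hco : ∀ i, ((β'' i : ℕ)) = β' i := fun i => rfl
    set k : ℕ := (∏ i, (β' i).factorial) * (3 - ∑ i, β' i).factorial with hk
    have hkpos : 0 < k := by
      refine Nat.mul_pos (Finset.prod_pos (fun i _ => Nat.factorial_pos _)) (Nat.factorial_pos _)
    have hk0 : ((k : ℕ) : ℂ) ≠ 0 := Nat.cast_ne_zero.mpr hkpos.ne'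
    set p : MvPolynomial (Fin 4) ℂ :=
      C (((k : ℕ) : ℂ))⁻¹ * ((∏ i, ∏ j ∈ range (β' i), (C ((ρ i : ℕ) : ℂ) - X i - C ((j:ℕ):ℂ))) *
        ∏ j ∈ range (3 - ∑ i, β' i),
          (C (3:ℂ) - (∑ i, (C ((ρ i : ℕ) : ℂ) - X i)) - C ((j:ℕ):ℂ))) with hp2
    have hdeg : p.totalDegree ≤ 3 := by
      rw [hp2]
      refine le_trans (totalDegree_mul _ _) ?_
      rw [totalDegree_C]
      refine le_trans (by exact Nat.le_add_left _ 0) ?_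
      simp only [Nat.zero_add]
      refine le_trans (totalDegree_mul _ _) ?_
      have d1 : (∏ i, ∏ j ∈ range (β' i),
          (C ((ρ i : ℕ) : ℂ) - X i - C ((j:ℕ):ℂ)) : MvPolynomial (Fin 4) ℂ).totalDegree
          ≤ ∑ i, β' i := by
        refine le_trans (totalDegree_finset_prod _ _) ?_
        refine Finset.sum_le_sum fun i _ => ?_
        refine le_trans (totalDegree_finset_prod _ _) ?_
        refine le_trans (Finset.sum_le_sum (g := fun _ => 1) fun j _ => ?_) ?_
        · have heq : (C ((ρ i : ℕ) : ℂ) - X i - C ((j:ℕ):ℂ) : MvPolynomial (Fin 4) ℂ)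
              = C (((ρ i : ℕ) : ℂ) - ((j:ℕ):ℂ)) - X i := by
            rw [map_sub]
            ring
          rw [heq]
          exact lin_deg _ _
        · simp
      have d2 : ((∏ j ∈ range (3 - ∑ i, β' i),
          (C (3:ℂ) - (∑ i, (C ((ρ i : ℕ) : ℂ) - X i)) - C ((j:ℕ):ℂ))
            : MvPolynomial (Fin 4) ℂ)).totalDegree ≤ 3 - ∑ i, β' i := by
        refine le_trans (totalDegree_finset_prod _ _) ?_
        refine le_trans (Finset.sum_le_sum (g := fun _ => 1) fun j _ => ?_) ?_
        · have heq : (C (3:ℂ) - (∑ i, (C ((ρ i : ℕ) : ℂ) - X i)) - C ((j:ℕ):ℂ)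
              : MvPolynomial (Fin 4) ℂ)
              = C ((3:ℂ) - ((j:ℕ):ℂ)) - (∑ i, (C ((ρ i : ℕ) : ℂ) - X i)) := by
            rw [map_sub]
            ring
          rw [heq]
          refine sub_deg _ _ ?_
          refine le_trans (totalDegree_finset_sum _ _) ?_
          exact Finset.sup_le fun i _ => lin_deg _ _
        · simp
      omega
    have heval : ∀ β ∈ idx3, A β * eval (w β) p
        = A β * ((((k : ℕ) : ℂ))⁻¹ * (if β = β'' then ((k : ℕ) : ℂ) else 0)) := by
      intro β hβ
      have hsb : (∑ i, (β i : ℕ)) ≤ 3 := hmem β hβ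
      congr 1
      rw [hp2, map_mul, eval_C, map_mul]
      congr 1
      have e1 : eval (w β) (∏ i, ∏ j ∈ range (β' i), (C ((ρ i : ℕ) : ℂ) - X i - C ((j:ℕ):ℂ)))
          = ∏ i, ((((β i : ℕ)).descFactorial (β' i) : ℕ) : ℂ) := by
        rw [map_prod]
        refine Finset.prod_congr rfl fun i _ => ?_
        rw [map_prod, df_cast]
        refine Finset.prod_congr rfl fun j _ => ?_
        simp only [map_sub, eval_X, eval_C, hw]
        ring
      have e2 : eval (w β) (∏ j ∈ range (3 - ∑ i, β' i),
            (C (3:ℂ) - (∑ i, (C ((ρ i : ℕ) : ℂ) - X i)) - C ((j:ℕ):ℂ)))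
          = (((3 - ∑ i, (β i : ℕ)).descFactorial (3 - ∑ i, β' i) : ℕ) : ℂ) := by
        rw [map_prod, df_cast]
        refine Finset.prod_congr rfl fun j _ => ?_
        simp only [map_sub, eval_X, eval_C, map_sum, hw]
        have : ((3 - ∑ i, (β i : ℕ) : ℕ) : ℂ) = (3:ℂ) - ∑ i, ((β i : ℕ) : ℂ) := by
          push_cast [hsb]
          ring
        rw [this]
        ring
      rw [e1, e2, ← Nat.cast_prod, ← Nat.cast_mul,
        natkey (fun i => (β i : ℕ)) β' hsb hβ']
      have hiff : ((fun i => (β i : ℕ)) = β') ↔ β = β'' := by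
        constructor
        · intro h
          funext i
          exact Fin.ext (congrFun h i)
        · intro h
          funext i
          rw [h]
      by_cases hcase : β = β''
      · rw [if_pos (hiff.mpr hcase), if_pos hcase]
      · rw [if_neg (fun hcon => hcase (hiff.mp hcon)), if_neg hcase]
        all_goals simp
    have h0 := key 3 p le_rfl hdeg
    rw [Finset.sum_congr rfl heval] at h0
    have hmem'' : β'' ∈ idx3 := by
      rw [idx3, Finset.mem_filter]
      refine ⟨Finset.mem_univ _, ?_⟩
      simpa [hco] using hβ'
    rw [Finset.sum_eq_single β''] at h0
    · rw [if_pos rfl, inv_mul_cancel₀ hk0, mul_one] at h0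
      have : A β'' = a β' := rfl
      rw [← this]
      exact h0
    · intro b _ hbne
      rw [if_neg hbne, mul_zero, mul_zero]
    · intro hcon
      exact absurd hmem'' hcon
  -- Conclusions
  have G2 : P = 0 := by
    rw [hP]
    refine Finset.sum_eq_zero fun β hβ => ?_
    rw [G3 _ (hmem β hβ), map_zero, zero_mul]
  refine ⟨?_, G2, G3⟩
  intro γ hγ
  rw [G2, pderivPow_zero, map_zero]
end

section
/- Let ρ ∈ ℕ^4 with every component ρ_i ≥ 3, and consider the linear system in unknowns (v_β)_{β ∈ ℕ^4, |β| ≤ 3}: for every multi-index γ ∈ ℕ^4 with |γ| ≤ 3, the equation Σ_{|β|≤3} (∏_{j=1}^4 (ρ_j - β_j)·(ρ_j - β_j - 1)···(ρ_j - β_j - γ_j + 1)) v_β = c_γ, where the coefficient of v_β in equation γ is the value at z=(1,1,1,1) of ∂^γ(z^{ρ-β}). Then the coefficient matrix of this system (a 35×35 matrix, since there are 35 multi-indices β with |β| ≤ 3 and 35 multi-indices γ with |γ| ≤ 3) is invertible. -/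
/-- The index type of multi-indices `γ ∈ ℕ⁴` with `|γ| ≤ 3` (components are then at most 3,
so we realize them inside `Fin 4 → Fin 4`). -/
def Idx3 : Type := {γ : Fin 4 → Fin 4 // (∑ i, (γ i : ℕ)) ≤ 3}

noncomputable instance : Fintype Idx3 := by unfold Idx3; infer_instance
noncomputable instance : DecidableEq Idx3 := Classical.decEq _

namespace Stmt5Aux

def Tlook : Fin 4 → Fin 4 → Fin 4 → Fin 4 → Fin 4 → Fin 4 → Fin 4 → Fin 4 → ℤ
  | 0, 0, 0, 0, 0, 0, 0, 0 => (-990)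
  | 0, 0, 0, 0, 0, 0, 0, 1 => 270
  | 0, 0, 0, 0, 0, 0, 0, 2 => (-27)
  | 0, 0, 0, 0, 0, 0, 0, 3 => 1
  | 0, 0, 0, 0, 0, 0, 1, 0 => 270
  | 0, 0, 0, 0, 0, 0, 1, 1 => (-54)
  | 0, 0, 0, 0, 0, 0, 1, 2 => 3
  | 0, 0, 0, 0, 0, 0, 2, 0 => (-27)
  | 0, 0, 0, 0, 0, 0, 2, 1 => 3
  | 0, 0, 0, 0, 0, 0, 3, 0 => 1
  | 0, 0, 0, 0, 0, 1, 0, 0 => 270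
  | 0, 0, 0, 0, 0, 1, 0, 1 => (-54)
  | 0, 0, 0, 0, 0, 1, 0, 2 => 3
  | 0, 0, 0, 0, 0, 1, 1, 0 => (-54)
  | 0, 0, 0, 0, 0, 1, 1, 1 => 6
  | 0, 0, 0, 0, 0, 1, 2, 0 => 3
  | 0, 0, 0, 0, 0, 2, 0, 0 => (-27)
  | 0, 0, 0, 0, 0, 2, 0, 1 => 3
  | 0, 0, 0, 0, 0, 2, 1, 0 => 3
  | 0, 0, 0, 0, 0, 3, 0, 0 => 1
  | 0, 0, 0, 0, 1, 0, 0, 0 => 270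
  | 0, 0, 0, 0, 1, 0, 0, 1 => (-54)
  | 0, 0, 0, 0, 1, 0, 0, 2 => 3
  | 0, 0, 0, 0, 1, 0, 1, 0 => (-54)
  | 0, 0, 0, 0, 1, 0, 1, 1 => 6
  | 0, 0, 0, 0, 1, 0, 2, 0 => 3
  | 0, 0, 0, 0, 1, 1, 0, 0 => (-54)
  | 0, 0, 0, 0, 1, 1, 0, 1 => 6
  | 0, 0, 0, 0, 1, 1, 1, 0 => 6
  | 0, 0, 0, 0, 1, 2, 0, 0 => 3
  | 0, 0, 0, 0, 2, 0, 0, 0 => (-27)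
  | 0, 0, 0, 0, 2, 0, 0, 1 => 3
  | 0, 0, 0, 0, 2, 0, 1, 0 => 3
  | 0, 0, 0, 0, 2, 1, 0, 0 => 3
  | 0, 0, 0, 0, 3, 0, 0, 0 => 1
  | 0, 0, 0, 1, 0, 0, 0, 0 => 810
  | 0, 0, 0, 1, 0, 0, 0, 1 => (-378)
  | 0, 0, 0, 1, 0, 0, 0, 2 => 57
  | 0, 0, 0, 1, 0, 0, 0, 3 => (-3)
  | 0, 0, 0, 1, 0, 0, 1, 0 => (-162)
  | 0, 0, 0, 1, 0, 0, 1, 1 => 66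
  | 0, 0, 0, 1, 0, 0, 1, 2 => (-6)
  | 0, 0, 0, 1, 0, 0, 2, 0 => 9
  | 0, 0, 0, 1, 0, 0, 2, 1 => (-3)
  | 0, 0, 0, 1, 0, 1, 0, 0 => (-162)
  | 0, 0, 0, 1, 0, 1, 0, 1 => 66
  | 0, 0, 0, 1, 0, 1, 0, 2 => (-6)
  | 0, 0, 0, 1, 0, 1, 1, 0 => 18
  | 0, 0, 0, 1, 0, 1, 1, 1 => (-6)
  | 0, 0, 0, 1, 0, 2, 0, 0 => 9
  | 0, 0, 0, 1, 0, 2, 0, 1 => (-3)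
  | 0, 0, 0, 1, 1, 0, 0, 0 => (-162)
  | 0, 0, 0, 1, 1, 0, 0, 1 => 66
  | 0, 0, 0, 1, 1, 0, 0, 2 => (-6)
  | 0, 0, 0, 1, 1, 0, 1, 0 => 18
  | 0, 0, 0, 1, 1, 0, 1, 1 => (-6)
  | 0, 0, 0, 1, 1, 1, 0, 0 => 18
  | 0, 0, 0, 1, 1, 1, 0, 1 => (-6)
  | 0, 0, 0, 1, 2, 0, 0, 0 => 9
  | 0, 0, 0, 1, 2, 0, 0, 1 => (-3)
  | 0, 0, 0, 2, 0, 0, 0, 0 => (-162)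
  | 0, 0, 0, 2, 0, 0, 0, 1 => 114
  | 0, 0, 0, 2, 0, 0, 0, 2 => (-33)
  | 0, 0, 0, 2, 0, 0, 0, 3 => 3
  | 0, 0, 0, 2, 0, 0, 1, 0 => 18
  | 0, 0, 0, 2, 0, 0, 1, 1 => (-12)
  | 0, 0, 0, 2, 0, 0, 1, 2 => 3
  | 0, 0, 0, 2, 0, 1, 0, 0 => 18
  | 0, 0, 0, 2, 0, 1, 0, 1 => (-12)
  | 0, 0, 0, 2, 0, 1, 0, 2 => 3
  | 0, 0, 0, 2, 1, 0, 0, 0 => 18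
  | 0, 0, 0, 2, 1, 0, 0, 1 => (-12)
  | 0, 0, 0, 2, 1, 0, 0, 2 => 3
  | 0, 0, 0, 3, 0, 0, 0, 0 => 6
  | 0, 0, 0, 3, 0, 0, 0, 1 => (-6)
  | 0, 0, 0, 3, 0, 0, 0, 2 => 3
  | 0, 0, 0, 3, 0, 0, 0, 3 => (-1)
  | 0, 0, 1, 0, 0, 0, 0, 0 => 810
  | 0, 0, 1, 0, 0, 0, 0, 1 => (-162)
  | 0, 0, 1, 0, 0, 0, 0, 2 => 9
  | 0, 0, 1, 0, 0, 0, 1, 0 => (-378)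
  | 0, 0, 1, 0, 0, 0, 1, 1 => 66
  | 0, 0, 1, 0, 0, 0, 1, 2 => (-3)
  | 0, 0, 1, 0, 0, 0, 2, 0 => 57
  | 0, 0, 1, 0, 0, 0, 2, 1 => (-6)
  | 0, 0, 1, 0, 0, 0, 3, 0 => (-3)
  | 0, 0, 1, 0, 0, 1, 0, 0 => (-162)
  | 0, 0, 1, 0, 0, 1, 0, 1 => 18
  | 0, 0, 1, 0, 0, 1, 1, 0 => 66
  | 0, 0, 1, 0, 0, 1, 1, 1 => (-6)
  | 0, 0, 1, 0, 0, 1, 2, 0 => (-6)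
  | 0, 0, 1, 0, 0, 2, 0, 0 => 9
  | 0, 0, 1, 0, 0, 2, 1, 0 => (-3)
  | 0, 0, 1, 0, 1, 0, 0, 0 => (-162)
  | 0, 0, 1, 0, 1, 0, 0, 1 => 18
  | 0, 0, 1, 0, 1, 0, 1, 0 => 66
  | 0, 0, 1, 0, 1, 0, 1, 1 => (-6)
  | 0, 0, 1, 0, 1, 0, 2, 0 => (-6)
  | 0, 0, 1, 0, 1, 1, 0, 0 => 18
  | 0, 0, 1, 0, 1, 1, 1, 0 => (-6)
  | 0, 0, 1, 0, 2, 0, 0, 0 => 9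
  | 0, 0, 1, 0, 2, 0, 1, 0 => (-3)
  | 0, 0, 1, 1, 0, 0, 0, 0 => (-486)
  | 0, 0, 1, 1, 0, 0, 0, 1 => 198
  | 0, 0, 1, 1, 0, 0, 0, 2 => (-18)
  | 0, 0, 1, 1, 0, 0, 1, 0 => 198
  | 0, 0, 1, 1, 0, 0, 1, 1 => (-78)
  | 0, 0, 1, 1, 0, 0, 1, 2 => 6
  | 0, 0, 1, 1, 0, 0, 2, 0 => (-18)
  | 0, 0, 1, 1, 0, 0, 2, 1 => 6
  | 0, 0, 1, 1, 0, 1, 0, 0 => 54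
  | 0, 0, 1, 1, 0, 1, 0, 1 => (-18)
  | 0, 0, 1, 1, 0, 1, 1, 0 => (-18)
  | 0, 0, 1, 1, 0, 1, 1, 1 => 6
  | 0, 0, 1, 1, 1, 0, 0, 0 => 54
  | 0, 0, 1, 1, 1, 0, 0, 1 => (-18)
  | 0, 0, 1, 1, 1, 0, 1, 0 => (-18)
  | 0, 0, 1, 1, 1, 0, 1, 1 => 6
  | 0, 0, 1, 2, 0, 0, 0, 0 => 54
  | 0, 0, 1, 2, 0, 0, 0, 1 => (-36)
  | 0, 0, 1, 2, 0, 0, 0, 2 => 9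
  | 0, 0, 1, 2, 0, 0, 1, 0 => (-18)
  | 0, 0, 1, 2, 0, 0, 1, 1 => 12
  | 0, 0, 1, 2, 0, 0, 1, 2 => (-3)
  | 0, 0, 2, 0, 0, 0, 0, 0 => (-162)
  | 0, 0, 2, 0, 0, 0, 0, 1 => 18
  | 0, 0, 2, 0, 0, 0, 1, 0 => 114
  | 0, 0, 2, 0, 0, 0, 1, 1 => (-12)
  | 0, 0, 2, 0, 0, 0, 2, 0 => (-33)
  | 0, 0, 2, 0, 0, 0, 2, 1 => 3
  | 0, 0, 2, 0, 0, 0, 3, 0 => 3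
  | 0, 0, 2, 0, 0, 1, 0, 0 => 18
  | 0, 0, 2, 0, 0, 1, 1, 0 => (-12)
  | 0, 0, 2, 0, 0, 1, 2, 0 => 3
  | 0, 0, 2, 0, 1, 0, 0, 0 => 18
  | 0, 0, 2, 0, 1, 0, 1, 0 => (-12)
  | 0, 0, 2, 0, 1, 0, 2, 0 => 3
  | 0, 0, 2, 1, 0, 0, 0, 0 => 54
  | 0, 0, 2, 1, 0, 0, 0, 1 => (-18)
  | 0, 0, 2, 1, 0, 0, 1, 0 => (-36)
  | 0, 0, 2, 1, 0, 0, 1, 1 => 12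
  | 0, 0, 2, 1, 0, 0, 2, 0 => 9
  | 0, 0, 2, 1, 0, 0, 2, 1 => (-3)
  | 0, 0, 3, 0, 0, 0, 0, 0 => 6
  | 0, 0, 3, 0, 0, 0, 1, 0 => (-6)
  | 0, 0, 3, 0, 0, 0, 2, 0 => 3
  | 0, 0, 3, 0, 0, 0, 3, 0 => (-1)
  | 0, 1, 0, 0, 0, 0, 0, 0 => 810
  | 0, 1, 0, 0, 0, 0, 0, 1 => (-162)
  | 0, 1, 0, 0, 0, 0, 0, 2 => 9
  | 0, 1, 0, 0, 0, 0, 1, 0 => (-162)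
  | 0, 1, 0, 0, 0, 0, 1, 1 => 18
  | 0, 1, 0, 0, 0, 0, 2, 0 => 9
  | 0, 1, 0, 0, 0, 1, 0, 0 => (-378)
  | 0, 1, 0, 0, 0, 1, 0, 1 => 66
  | 0, 1, 0, 0, 0, 1, 0, 2 => (-3)
  | 0, 1, 0, 0, 0, 1, 1, 0 => 66
  | 0, 1, 0, 0, 0, 1, 1, 1 => (-6)
  | 0, 1, 0, 0, 0, 1, 2, 0 => (-3)
  | 0, 1, 0, 0, 0, 2, 0, 0 => 57
  | 0, 1, 0, 0, 0, 2, 0, 1 => (-6)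
  | 0, 1, 0, 0, 0, 2, 1, 0 => (-6)
  | 0, 1, 0, 0, 0, 3, 0, 0 => (-3)
  | 0, 1, 0, 0, 1, 0, 0, 0 => (-162)
  | 0, 1, 0, 0, 1, 0, 0, 1 => 18
  | 0, 1, 0, 0, 1, 0, 1, 0 => 18
  | 0, 1, 0, 0, 1, 1, 0, 0 => 66
  | 0, 1, 0, 0, 1, 1, 0, 1 => (-6)
  | 0, 1, 0, 0, 1, 1, 1, 0 => (-6)
  | 0, 1, 0, 0, 1, 2, 0, 0 => (-6)
  | 0, 1, 0, 0, 2, 0, 0, 0 => 9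
  | 0, 1, 0, 0, 2, 1, 0, 0 => (-3)
  | 0, 1, 0, 1, 0, 0, 0, 0 => (-486)
  | 0, 1, 0, 1, 0, 0, 0, 1 => 198
  | 0, 1, 0, 1, 0, 0, 0, 2 => (-18)
  | 0, 1, 0, 1, 0, 0, 1, 0 => 54
  | 0, 1, 0, 1, 0, 0, 1, 1 => (-18)
  | 0, 1, 0, 1, 0, 1, 0, 0 => 198
  | 0, 1, 0, 1, 0, 1, 0, 1 => (-78)
  | 0, 1, 0, 1, 0, 1, 0, 2 => 6
  | 0, 1, 0, 1, 0, 1, 1, 0 => (-18)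
  | 0, 1, 0, 1, 0, 1, 1, 1 => 6
  | 0, 1, 0, 1, 0, 2, 0, 0 => (-18)
  | 0, 1, 0, 1, 0, 2, 0, 1 => 6
  | 0, 1, 0, 1, 1, 0, 0, 0 => 54
  | 0, 1, 0, 1, 1, 0, 0, 1 => (-18)
  | 0, 1, 0, 1, 1, 1, 0, 0 => (-18)
  | 0, 1, 0, 1, 1, 1, 0, 1 => 6
  | 0, 1, 0, 2, 0, 0, 0, 0 => 54
  | 0, 1, 0, 2, 0, 0, 0, 1 => (-36)
  | 0, 1, 0, 2, 0, 0, 0, 2 => 9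
  | 0, 1, 0, 2, 0, 1, 0, 0 => (-18)
  | 0, 1, 0, 2, 0, 1, 0, 1 => 12
  | 0, 1, 0, 2, 0, 1, 0, 2 => (-3)
  | 0, 1, 1, 0, 0, 0, 0, 0 => (-486)
  | 0, 1, 1, 0, 0, 0, 0, 1 => 54
  | 0, 1, 1, 0, 0, 0, 1, 0 => 198
  | 0, 1, 1, 0, 0, 0, 1, 1 => (-18)
  | 0, 1, 1, 0, 0, 0, 2, 0 => (-18)
  | 0, 1, 1, 0, 0, 1, 0, 0 => 198
  | 0, 1, 1, 0, 0, 1, 0, 1 => (-18)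
  | 0, 1, 1, 0, 0, 1, 1, 0 => (-78)
  | 0, 1, 1, 0, 0, 1, 1, 1 => 6
  | 0, 1, 1, 0, 0, 1, 2, 0 => 6
  | 0, 1, 1, 0, 0, 2, 0, 0 => (-18)
  | 0, 1, 1, 0, 0, 2, 1, 0 => 6
  | 0, 1, 1, 0, 1, 0, 0, 0 => 54
  | 0, 1, 1, 0, 1, 0, 1, 0 => (-18)
  | 0, 1, 1, 0, 1, 1, 0, 0 => (-18)
  | 0, 1, 1, 0, 1, 1, 1, 0 => 6
  | 0, 1, 1, 1, 0, 0, 0, 0 => 162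
  | 0, 1, 1, 1, 0, 0, 0, 1 => (-54)
  | 0, 1, 1, 1, 0, 0, 1, 0 => (-54)
  | 0, 1, 1, 1, 0, 0, 1, 1 => 18
  | 0, 1, 1, 1, 0, 1, 0, 0 => (-54)
  | 0, 1, 1, 1, 0, 1, 0, 1 => 18
  | 0, 1, 1, 1, 0, 1, 1, 0 => 18
  | 0, 1, 1, 1, 0, 1, 1, 1 => (-6)
  | 0, 1, 2, 0, 0, 0, 0, 0 => 54
  | 0, 1, 2, 0, 0, 0, 1, 0 => (-36)
  | 0, 1, 2, 0, 0, 0, 2, 0 => 9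
  | 0, 1, 2, 0, 0, 1, 0, 0 => (-18)
  | 0, 1, 2, 0, 0, 1, 1, 0 => 12
  | 0, 1, 2, 0, 0, 1, 2, 0 => (-3)
  | 0, 2, 0, 0, 0, 0, 0, 0 => (-162)
  | 0, 2, 0, 0, 0, 0, 0, 1 => 18
  | 0, 2, 0, 0, 0, 0, 1, 0 => 18
  | 0, 2, 0, 0, 0, 1, 0, 0 => 114
  | 0, 2, 0, 0, 0, 1, 0, 1 => (-12)
  | 0, 2, 0, 0, 0, 1, 1, 0 => (-12)
  | 0, 2, 0, 0, 0, 2, 0, 0 => (-33)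
  | 0, 2, 0, 0, 0, 2, 0, 1 => 3
  | 0, 2, 0, 0, 0, 2, 1, 0 => 3
  | 0, 2, 0, 0, 0, 3, 0, 0 => 3
  | 0, 2, 0, 0, 1, 0, 0, 0 => 18
  | 0, 2, 0, 0, 1, 1, 0, 0 => (-12)
  | 0, 2, 0, 0, 1, 2, 0, 0 => 3
  | 0, 2, 0, 1, 0, 0, 0, 0 => 54
  | 0, 2, 0, 1, 0, 0, 0, 1 => (-18)
  | 0, 2, 0, 1, 0, 1, 0, 0 => (-36)
  | 0, 2, 0, 1, 0, 1, 0, 1 => 12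
  | 0, 2, 0, 1, 0, 2, 0, 0 => 9
  | 0, 2, 0, 1, 0, 2, 0, 1 => (-3)
  | 0, 2, 1, 0, 0, 0, 0, 0 => 54
  | 0, 2, 1, 0, 0, 0, 1, 0 => (-18)
  | 0, 2, 1, 0, 0, 1, 0, 0 => (-36)
  | 0, 2, 1, 0, 0, 1, 1, 0 => 12
  | 0, 2, 1, 0, 0, 2, 0, 0 => 9
  | 0, 2, 1, 0, 0, 2, 1, 0 => (-3)
  | 0, 3, 0, 0, 0, 0, 0, 0 => 6
  | 0, 3, 0, 0, 0, 1, 0, 0 => (-6)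
  | 0, 3, 0, 0, 0, 2, 0, 0 => 3
  | 0, 3, 0, 0, 0, 3, 0, 0 => (-1)
  | 1, 0, 0, 0, 0, 0, 0, 0 => 810
  | 1, 0, 0, 0, 0, 0, 0, 1 => (-162)
  | 1, 0, 0, 0, 0, 0, 0, 2 => 9
  | 1, 0, 0, 0, 0, 0, 1, 0 => (-162)
  | 1, 0, 0, 0, 0, 0, 1, 1 => 18
  | 1, 0, 0, 0, 0, 0, 2, 0 => 9
  | 1, 0, 0, 0, 0, 1, 0, 0 => (-162)
  | 1, 0, 0, 0, 0, 1, 0, 1 => 18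
  | 1, 0, 0, 0, 0, 1, 1, 0 => 18
  | 1, 0, 0, 0, 0, 2, 0, 0 => 9
  | 1, 0, 0, 0, 1, 0, 0, 0 => (-378)
  | 1, 0, 0, 0, 1, 0, 0, 1 => 66
  | 1, 0, 0, 0, 1, 0, 0, 2 => (-3)
  | 1, 0, 0, 0, 1, 0, 1, 0 => 66
  | 1, 0, 0, 0, 1, 0, 1, 1 => (-6)
  | 1, 0, 0, 0, 1, 0, 2, 0 => (-3)
  | 1, 0, 0, 0, 1, 1, 0, 0 => 66
  | 1, 0, 0, 0, 1, 1, 0, 1 => (-6)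
  | 1, 0, 0, 0, 1, 1, 1, 0 => (-6)
  | 1, 0, 0, 0, 1, 2, 0, 0 => (-3)
  | 1, 0, 0, 0, 2, 0, 0, 0 => 57
  | 1, 0, 0, 0, 2, 0, 0, 1 => (-6)
  | 1, 0, 0, 0, 2, 0, 1, 0 => (-6)
  | 1, 0, 0, 0, 2, 1, 0, 0 => (-6)
  | 1, 0, 0, 0, 3, 0, 0, 0 => (-3)
  | 1, 0, 0, 1, 0, 0, 0, 0 => (-486)
  | 1, 0, 0, 1, 0, 0, 0, 1 => 198
  | 1, 0, 0, 1, 0, 0, 0, 2 => (-18)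
  | 1, 0, 0, 1, 0, 0, 1, 0 => 54
  | 1, 0, 0, 1, 0, 0, 1, 1 => (-18)
  | 1, 0, 0, 1, 0, 1, 0, 0 => 54
  | 1, 0, 0, 1, 0, 1, 0, 1 => (-18)
  | 1, 0, 0, 1, 1, 0, 0, 0 => 198
  | 1, 0, 0, 1, 1, 0, 0, 1 => (-78)
  | 1, 0, 0, 1, 1, 0, 0, 2 => 6
  | 1, 0, 0, 1, 1, 0, 1, 0 => (-18)
  | 1, 0, 0, 1, 1, 0, 1, 1 => 6
  | 1, 0, 0, 1, 1, 1, 0, 0 => (-18)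
  | 1, 0, 0, 1, 1, 1, 0, 1 => 6
  | 1, 0, 0, 1, 2, 0, 0, 0 => (-18)
  | 1, 0, 0, 1, 2, 0, 0, 1 => 6
  | 1, 0, 0, 2, 0, 0, 0, 0 => 54
  | 1, 0, 0, 2, 0, 0, 0, 1 => (-36)
  | 1, 0, 0, 2, 0, 0, 0, 2 => 9
  | 1, 0, 0, 2, 1, 0, 0, 0 => (-18)
  | 1, 0, 0, 2, 1, 0, 0, 1 => 12
  | 1, 0, 0, 2, 1, 0, 0, 2 => (-3)
  | 1, 0, 1, 0, 0, 0, 0, 0 => (-486)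
  | 1, 0, 1, 0, 0, 0, 0, 1 => 54
  | 1, 0, 1, 0, 0, 0, 1, 0 => 198
  | 1, 0, 1, 0, 0, 0, 1, 1 => (-18)
  | 1, 0, 1, 0, 0, 0, 2, 0 => (-18)
  | 1, 0, 1, 0, 0, 1, 0, 0 => 54
  | 1, 0, 1, 0, 0, 1, 1, 0 => (-18)
  | 1, 0, 1, 0, 1, 0, 0, 0 => 198
  | 1, 0, 1, 0, 1, 0, 0, 1 => (-18)
  | 1, 0, 1, 0, 1, 0, 1, 0 => (-78)
  | 1, 0, 1, 0, 1, 0, 1, 1 => 6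
  | 1, 0, 1, 0, 1, 0, 2, 0 => 6
  | 1, 0, 1, 0, 1, 1, 0, 0 => (-18)
  | 1, 0, 1, 0, 1, 1, 1, 0 => 6
  | 1, 0, 1, 0, 2, 0, 0, 0 => (-18)
  | 1, 0, 1, 0, 2, 0, 1, 0 => 6
  | 1, 0, 1, 1, 0, 0, 0, 0 => 162
  | 1, 0, 1, 1, 0, 0, 0, 1 => (-54)
  | 1, 0, 1, 1, 0, 0, 1, 0 => (-54)
  | 1, 0, 1, 1, 0, 0, 1, 1 => 18
  | 1, 0, 1, 1, 1, 0, 0, 0 => (-54)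
  | 1, 0, 1, 1, 1, 0, 0, 1 => 18
  | 1, 0, 1, 1, 1, 0, 1, 0 => 18
  | 1, 0, 1, 1, 1, 0, 1, 1 => (-6)
  | 1, 0, 2, 0, 0, 0, 0, 0 => 54
  | 1, 0, 2, 0, 0, 0, 1, 0 => (-36)
  | 1, 0, 2, 0, 0, 0, 2, 0 => 9
  | 1, 0, 2, 0, 1, 0, 0, 0 => (-18)
  | 1, 0, 2, 0, 1, 0, 1, 0 => 12
  | 1, 0, 2, 0, 1, 0, 2, 0 => (-3)
  | 1, 1, 0, 0, 0, 0, 0, 0 => (-486)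
  | 1, 1, 0, 0, 0, 0, 0, 1 => 54
  | 1, 1, 0, 0, 0, 0, 1, 0 => 54
  | 1, 1, 0, 0, 0, 1, 0, 0 => 198
  | 1, 1, 0, 0, 0, 1, 0, 1 => (-18)
  | 1, 1, 0, 0, 0, 1, 1, 0 => (-18)
  | 1, 1, 0, 0, 0, 2, 0, 0 => (-18)
  | 1, 1, 0, 0, 1, 0, 0, 0 => 198
  | 1, 1, 0, 0, 1, 0, 0, 1 => (-18)
  | 1, 1, 0, 0, 1, 0, 1, 0 => (-18)
  | 1, 1, 0, 0, 1, 1, 0, 0 => (-78)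
  | 1, 1, 0, 0, 1, 1, 0, 1 => 6
  | 1, 1, 0, 0, 1, 1, 1, 0 => 6
  | 1, 1, 0, 0, 1, 2, 0, 0 => 6
  | 1, 1, 0, 0, 2, 0, 0, 0 => (-18)
  | 1, 1, 0, 0, 2, 1, 0, 0 => 6
  | 1, 1, 0, 1, 0, 0, 0, 0 => 162
  | 1, 1, 0, 1, 0, 0, 0, 1 => (-54)
  | 1, 1, 0, 1, 0, 1, 0, 0 => (-54)
  | 1, 1, 0, 1, 0, 1, 0, 1 => 18
  | 1, 1, 0, 1, 1, 0, 0, 0 => (-54)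
  | 1, 1, 0, 1, 1, 0, 0, 1 => 18
  | 1, 1, 0, 1, 1, 1, 0, 0 => 18
  | 1, 1, 0, 1, 1, 1, 0, 1 => (-6)
  | 1, 1, 1, 0, 0, 0, 0, 0 => 162
  | 1, 1, 1, 0, 0, 0, 1, 0 => (-54)
  | 1, 1, 1, 0, 0, 1, 0, 0 => (-54)
  | 1, 1, 1, 0, 0, 1, 1, 0 => 18
  | 1, 1, 1, 0, 1, 0, 0, 0 => (-54)
  | 1, 1, 1, 0, 1, 0, 1, 0 => 18
  | 1, 1, 1, 0, 1, 1, 0, 0 => 18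
  | 1, 1, 1, 0, 1, 1, 1, 0 => (-6)
  | 1, 2, 0, 0, 0, 0, 0, 0 => 54
  | 1, 2, 0, 0, 0, 1, 0, 0 => (-36)
  | 1, 2, 0, 0, 0, 2, 0, 0 => 9
  | 1, 2, 0, 0, 1, 0, 0, 0 => (-18)
  | 1, 2, 0, 0, 1, 1, 0, 0 => 12
  | 1, 2, 0, 0, 1, 2, 0, 0 => (-3)
  | 2, 0, 0, 0, 0, 0, 0, 0 => (-162)
  | 2, 0, 0, 0, 0, 0, 0, 1 => 18
  | 2, 0, 0, 0, 0, 0, 1, 0 => 18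
  | 2, 0, 0, 0, 0, 1, 0, 0 => 18
  | 2, 0, 0, 0, 1, 0, 0, 0 => 114
  | 2, 0, 0, 0, 1, 0, 0, 1 => (-12)
  | 2, 0, 0, 0, 1, 0, 1, 0 => (-12)
  | 2, 0, 0, 0, 1, 1, 0, 0 => (-12)
  | 2, 0, 0, 0, 2, 0, 0, 0 => (-33)
  | 2, 0, 0, 0, 2, 0, 0, 1 => 3
  | 2, 0, 0, 0, 2, 0, 1, 0 => 3
  | 2, 0, 0, 0, 2, 1, 0, 0 => 3
  | 2, 0, 0, 0, 3, 0, 0, 0 => 3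
  | 2, 0, 0, 1, 0, 0, 0, 0 => 54
  | 2, 0, 0, 1, 0, 0, 0, 1 => (-18)
  | 2, 0, 0, 1, 1, 0, 0, 0 => (-36)
  | 2, 0, 0, 1, 1, 0, 0, 1 => 12
  | 2, 0, 0, 1, 2, 0, 0, 0 => 9
  | 2, 0, 0, 1, 2, 0, 0, 1 => (-3)
  | 2, 0, 1, 0, 0, 0, 0, 0 => 54
  | 2, 0, 1, 0, 0, 0, 1, 0 => (-18)
  | 2, 0, 1, 0, 1, 0, 0, 0 => (-36)
  | 2, 0, 1, 0, 1, 0, 1, 0 => 12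
  | 2, 0, 1, 0, 2, 0, 0, 0 => 9
  | 2, 0, 1, 0, 2, 0, 1, 0 => (-3)
  | 2, 1, 0, 0, 0, 0, 0, 0 => 54
  | 2, 1, 0, 0, 0, 1, 0, 0 => (-18)
  | 2, 1, 0, 0, 1, 0, 0, 0 => (-36)
  | 2, 1, 0, 0, 1, 1, 0, 0 => 12
  | 2, 1, 0, 0, 2, 0, 0, 0 => 9
  | 2, 1, 0, 0, 2, 1, 0, 0 => (-3)
  | 3, 0, 0, 0, 0, 0, 0, 0 => 6
  | 3, 0, 0, 0, 1, 0, 0, 0 => (-6)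
  | 3, 0, 0, 0, 2, 0, 0, 0 => 3
  | 3, 0, 0, 0, 3, 0, 0, 0 => (-1)
  | _, _, _, _, _, _, _, _ => 0

def Tmat (k β : Idx3) : ℤ :=
  Tlook (k.1 0) (k.1 1) (k.1 2) (k.1 3) (β.1 0) (β.1 1) (β.1 2) (β.1 3)

/-- Entries of the base matrix, as natural numbers. -/
def mzb (γ β : Idx3) : ℕ := ∏ j, (3 - (β.1 j : ℕ)).descFactorial (γ.1 j : ℕ)

set_option maxRecDepth 100000 in
set_option maxHeartbeats 10000000 in
lemma cert : ∀ γ β : Idx3, (∑ k : Idx3, (mzb γ k : ℤ) * Tmat k β)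
    = if γ.1 = β.1 then 6 else 0 := by decide

variable (R : Type) [CommRing R]

/-- The matrix, over an arbitrary commutative ring. -/
def Mz (ρ : Fin 4 → ℕ) : Matrix Idx3 Idx3 R :=
  Matrix.of fun γ β : Idx3 =>
    (∏ j, ((ρ j - (β.1 j : ℕ)).descFactorial (γ.1 j : ℕ) : R))

/-- The certificate matrix, over an arbitrary commutative ring. -/
def TR : Matrix Idx3 Idx3 R := Matrix.of fun k β : Idx3 => ((Tmat k β : ℤ) : R)

lemma certM : Mz R (fun _ => 3) * TR R = (6 : R) • 1 := by
  ext γ β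
  rw [Matrix.mul_apply]
  have h : (∑ k : Idx3, Mz R (fun _ => 3) γ k * TR R k β)
      = (((∑ k : Idx3, (mzb γ k : ℤ) * Tmat k β) : ℤ) : R) := by
    push_cast [Mz, TR, mzb]
    rfl
  rw [h, cert γ β]
  rcases eq_or_ne γ β with rfl | hne
  · rw [if_pos rfl]
    simp [Matrix.one_apply]
  · rw [if_neg (fun hh => hne (Subtype.ext hh))]
    simp [Matrix.one_apply, hne]

/-- Shift matrix for coordinate `i`. -/
def Nsh (i : Fin 4) : Matrix Idx3 Idx3 R :=
  Matrix.of fun γ k =>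
    if (∀ j, (k.1 j : ℕ) + (if j = i then 1 else 0) = (γ.1 j : ℕ)) then ((γ.1 i : ℕ) : R)
    else 0

lemma desc_succ (n k : ℕ) :
    (n + 1).descFactorial (k + 1) = n.descFactorial (k + 1) + (k + 1) * n.descFactorial k := by
  rw [Nat.succ_descFactorial_succ]
  rcases le_or_gt k n with h | h
  · rw [Nat.descFactorial_succ, ← add_mul]
    congr 1
    omega
  · rw [Nat.descFactorial_eq_zero_iff_lt.2 h,
      Nat.descFactorial_eq_zero_iff_lt.2 (Nat.lt_succ_of_lt h)]
    simp

lemma shift (i : Fin 4) (ρ ρ' : Fin 4 → ℕ) (hρ : ∀ j, 3 ≤ ρ j)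
    (hne : ∀ j, j ≠ i → ρ' j = ρ j) (hi : ρ' i = ρ i + 1) :
    Mz R ρ' = (1 + Nsh R i) * Mz R ρ := by
  ext γ β
  rw [Matrix.add_mul, Matrix.one_mul, Matrix.add_apply, Matrix.mul_apply]
  have hβ : (β.1 i : ℕ) ≤ ρ i := le_trans (by omega) (hρ i)
  rcases h0 : (γ.1 i : ℕ) with _ | c
  · -- γ_i = 0 : no shift term
    have hz : (∑ k : Idx3, Nsh R i γ k * Mz R ρ k β) = 0 := by
      apply Finset.sum_eq_zero
      intro k _
      have : ¬ (∀ j, (k.1 j : ℕ) + (if j = i then 1 else 0) = (γ.1 j : ℕ)) := by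
        intro hC
        have := hC i
        simp [h0] at this
      simp [Nsh, this]
    rw [hz, add_zero]
    simp only [Mz, Matrix.of_apply]
    apply Finset.prod_congr rfl
    intro j _
    rcases eq_or_ne j i with rfl | hji
    · rw [h0]; simp
    · rw [hne j hji]
  · -- γ_i = c + 1
    have hc4 : c < 4 := by have := (γ.1 i).isLt; omega
    have hsum : (∑ j, ((Function.update γ.1 i ⟨c, hc4⟩ j : Fin 4) : ℕ)) ≤ 3 := by
      refine le_trans (Finset.sum_le_sum fun j _ => ?_) γ.2
      rcases eq_or_ne j i with rfl | hji
      · rw [Function.update_self]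
        have hcc : ((⟨c, hc4⟩ : Fin 4) : ℕ) = c := rfl
        omega
      · rw [Function.update_of_ne hji]
    set k0 : Idx3 := ⟨Function.update γ.1 i ⟨c, hc4⟩, hsum⟩ with hk0
    have hC0 : ∀ j, ((k0.1 j : ℕ) + (if j = i then 1 else 0) = (γ.1 j : ℕ)) := by
      intro j
      rcases eq_or_ne j i with rfl | hji
      · simp [hk0, Function.update_self, h0]
      · simp [hk0, Function.update_of_ne hji, hji]
    have hz : (∑ k : Idx3, Nsh R i γ k * Mz R ρ k β) = ((c : R) + 1) * Mz R ρ k0 β := by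
      rw [Finset.sum_eq_single k0]
      · have : Nsh R i γ k0 = ((c : R) + 1) := by
          simp only [Nsh, Matrix.of_apply, if_pos hC0, h0]
          push_cast
          ring
        rw [this]
      · intro k _ hkne
        have : ¬ (∀ j, (k.1 j : ℕ) + (if j = i then 1 else 0) = (γ.1 j : ℕ)) := by
          intro hC
          apply hkne
          apply Subtype.ext
          funext j
          have h1 := hC j
          have h2 := hC0 j
          exact Fin.ext (by omega)
        simp [Nsh, this]
      · intro h; exact absurd (Finset.mem_univ k0) h
    rw [hz]
    -- split off factor i from the three products
    have hmem : (i : Fin 4) ∈ (Finset.univ : Finset (Fin 4)) := Finset.mem_univ i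
    simp only [Mz, Matrix.of_apply]
    rw [← Finset.mul_prod_erase _ _ hmem, ← Finset.mul_prod_erase _ _ hmem,
      ← Finset.mul_prod_erase _
        (fun j => ((ρ j - (β.1 j : ℕ)).descFactorial (k0.1 j : ℕ) : R)) hmem]
    have hPe : ∀ f g : Fin 4 → R, (∀ j, j ≠ i → f j = g j) →
        (∏ j ∈ Finset.univ.erase i, f j) = ∏ j ∈ Finset.univ.erase i, g j := by
      intro f g hfg
      exact Finset.prod_congr rfl fun j hj => hfg j (Finset.mem_erase.1 hj).1
    have e1 : (∏ j ∈ Finset.univ.erase i, ((ρ' j - (β.1 j : ℕ)).descFactorial (γ.1 j : ℕ) : R))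
        = ∏ j ∈ Finset.univ.erase i, ((ρ j - (β.1 j : ℕ)).descFactorial (γ.1 j : ℕ) : R) := by
      apply hPe; intro j hj; rw [hne j hj]
    have e2 : (∏ j ∈ Finset.univ.erase i, ((ρ j - (β.1 j : ℕ)).descFactorial (k0.1 j : ℕ) : R))
        = ∏ j ∈ Finset.univ.erase i, ((ρ j - (β.1 j : ℕ)).descFactorial (γ.1 j : ℕ) : R) := by
      apply hPe; intro j hj; rw [hk0]; simp [Function.update_of_ne hj]
    rw [e1, e2]
    have hk0i : (k0.1 i : ℕ) = c := by simp [hk0, Function.update_self]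
    have hρ'i : ρ' i - (β.1 i : ℕ) = (ρ i - (β.1 i : ℕ)) + 1 := by omega
    have key : ((ρ' i - (β.1 i : ℕ)).descFactorial (γ.1 i : ℕ) : R)
        = ((ρ i - (β.1 i : ℕ)).descFactorial (γ.1 i : ℕ) : R)
          + ((c : R) + 1) * ((ρ i - (β.1 i : ℕ)).descFactorial (k0.1 i : ℕ) : R) := by
      rw [hk0i, h0, hρ'i, desc_succ]
      push_cast
      ring
    rw [key]
    ring

def deg (γ : Idx3) : ℕ := ∑ j, (γ.1 j : ℕ)

lemma Nsh_pow_aux (i : Fin 4) : ∀ m : ℕ, ∀ γ β : Idx3, deg γ < m → ((Nsh R i) ^ m) γ β = 0 := by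
  intro m
  induction m with
  | zero => intro γ β h; omega
  | succ m ih =>
    intro γ β h
    rw [pow_succ', Matrix.mul_apply]
    apply Finset.sum_eq_zero
    intro k _
    by_cases hC : ∀ j, (k.1 j : ℕ) + (if j = i then 1 else 0) = (γ.1 j : ℕ)
    · have hdeg : deg k + 1 = deg γ := by
        have : (∑ j, ((k.1 j : ℕ) + (if j = i then 1 else 0))) = ∑ j, (γ.1 j : ℕ) :=
          Finset.sum_congr rfl fun j _ => hC j
        rw [Finset.sum_add_distrib, Finset.sum_ite_eq' Finset.univ i (fun _ => 1)] at this
        simpa [deg] using this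
      rw [ih k β (by omega), mul_zero]
    · simp [Nsh, hC]

lemma Nsh_nilpotent (i : Fin 4) : IsNilpotent (Nsh R i) := by
  refine ⟨4, ?_⟩
  ext γ β
  rw [Matrix.zero_apply]
  exact Nsh_pow_aux R i 4 γ β (by have := γ.2; simp only [deg]; omega)

/-- Factorization: any admissible `Mz ρ` is a unit multiple of the base matrix. -/
lemma fact (n : ℕ) : ∀ ρ : Fin 4 → ℕ, (∀ j, 3 ≤ ρ j) → (∑ j, ρ j) = n + 12 →
    ∃ U : Matrix Idx3 Idx3 R, IsUnit U ∧ Mz R ρ = U * Mz R (fun _ => 3) := by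
  induction n with
  | zero =>
    intro ρ hρ hsum
    have h0 := hρ 0; have h1 := hρ 1; have h2 := hρ 2; have h3 := hρ 3
    rw [Fin.sum_univ_four] at hsum
    have hρ3 : ρ = fun _ => 3 := by
      funext j
      show ρ j = 3
      fin_cases j
      · exact (by omega : ρ 0 = 3)
      · exact (by omega : ρ 1 = 3)
      · exact (by omega : ρ 2 = 3)
      · exact (by omega : ρ 3 = 3)
    exact ⟨1, isUnit_one, by rw [hρ3, one_mul]⟩
  | succ n ih =>
    intro ρ hρ hsum
    have h0 := hρ 0; have h1 := hρ 1; have h2 := hρ 2; have h3 := hρ 3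
    have hsum4 := hsum
    rw [Fin.sum_univ_four] at hsum4
    have hex : ∃ i : Fin 4, 4 ≤ ρ i := by
      by_contra hno
      push_neg at hno
      have := hno 0; have := hno 1; have := hno 2; have := hno 3
      omega
    obtain ⟨i, hi⟩ := hex
    set ρ' : Fin 4 → ℕ := fun j => if j = i then ρ j - 1 else ρ j with hρ'def
    have hρ' : ∀ j, 3 ≤ ρ' j := by
      intro j
      rw [hρ'def]
      rcases eq_or_ne j i with rfl | hji
      · simp; omega
      · simp [hji]; exact hρ j
    have hsum' : (∑ j, ρ' j) = n + 12 := by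
      have hpt : ∀ j, ρ j = ρ' j + (if j = i then 1 else 0) := by
        intro j
        rw [hρ'def]
        rcases eq_or_ne j i with rfl | hji
        · simp; omega
        · simp [hji]
      have : (∑ j, ρ j) = (∑ j, ρ' j) + 1 := by
        rw [Finset.sum_congr rfl fun j _ => hpt j, Finset.sum_add_distrib,
          Finset.sum_ite_eq' Finset.univ i (fun _ => 1)]
        simp
      omega
    obtain ⟨U, hU, hfac⟩ := ih ρ' hρ' hsum'
    have hstep : Mz R ρ = (1 + Nsh R i) * Mz R ρ' := by
      apply shift R i ρ' ρ hρ'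
      · intro j hji
        rw [hρ'def]
        simp [hji]
      · rw [hρ'def]
        simp
        omega
    refine ⟨(1 + Nsh R i) * U, ((Nsh_nilpotent R i).isUnit_one_add).mul hU, ?_⟩
    rw [hstep, hfac, mul_assoc]

end Stmt5Aux

/-- The 35×35 matrix whose `(γ, β)` entry is the value at `z = (1,1,1,1)` of
`∂^γ (z^{ρ-β})`, i.e. `∏ⱼ (ρⱼ-βⱼ)(ρⱼ-βⱼ-1)⋯(ρⱼ-βⱼ-γⱼ+1)`, is invertible whenever every
component of `ρ` is at least 3. -/
theorem stmt5 (ρ : Fin 4 → ℕ) (hρ : ∀ j, 3 ≤ ρ j) :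
    IsUnit (Matrix.det (Matrix.of fun γ β : Idx3 =>
      (∏ j, ((ρ j - (β.1 j : ℕ)).descFactorial (γ.1 j : ℕ) : ℂ)))) := by
  have h0 := hρ 0; have h1 := hρ 1; have h2 := hρ 2; have h3 := hρ 3
  have h12 : 12 ≤ ∑ j, ρ j := by rw [Fin.sum_univ_four]; omega
  obtain ⟨U, hU, hfac⟩ := Stmt5Aux.fact ℂ ((∑ j, ρ j) - 12) ρ hρ (by omega)
  have h2d := congrArg Matrix.det hfac
  rw [Matrix.det_mul] at h2d
  have hb := congrArg Matrix.det (Stmt5Aux.certM ℂ)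
  rw [Matrix.det_mul, Matrix.det_smul, Matrix.det_one, mul_one] at hb
  have hbase : IsUnit (Stmt5Aux.Mz ℂ (fun _ => 3)).det := by
    rw [isUnit_iff_ne_zero]
    intro hz
    rw [hz, zero_mul] at hb
    exact (pow_ne_zero _ (by norm_num : (6:ℂ) ≠ 0)) hb.symm
  have hM : (Matrix.of fun γ β : Idx3 =>
      (∏ j, ((ρ j - (β.1 j : ℕ)).descFactorial (γ.1 j : ℕ) : ℂ)))
      = Stmt5Aux.Mz ℂ ρ := by
    ext γ β
    rfl
  rw [hM, h2d]
  exact ((Matrix.isUnit_iff_isUnit_det U).mp hU).mul hbase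
end

section
/- Fix a multi-index ρ ∈ ℕ^4 with all components ρ_j ≥ 3, and consider the linear system in the 35 unknowns (v_β)_{|β|≤3} consisting of: Σ_{|β|≤3} v_β = c_0; for each j, Σ_{|β|≤3} (ρ_j - β_j) v_β = c_j; for each j ≤ k, Σ_{|β|≤3} (ρ_j-β_j)(ρ_k-β_k - [j=k]) v_β = c_{jk}; and for each j ≤ k ≤ l, the analogous third-order falling-factorial sums equal c_{jkl}. This system of 35 equations in 35 unknowns has a unique solution for any right-hand side (c_γ). -/
namespace Stmt10Aux

/-- base-4 encoding -/
def key (γ : Idx3) : ℕ := (γ.1 0 : ℕ) + 4 * (γ.1 1 : ℕ) + 16 * (γ.1 2 : ℕ) + 64 * (γ.1 3 : ℕ)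

lemma key_injective : Function.Injective key := by
  intro a b h
  unfold key at h
  have h0 := (a.1 0).isLt; have h1 := (a.1 1).isLt
  have h2 := (a.1 2).isLt; have h3 := (a.1 3).isLt
  have g0 := (b.1 0).isLt; have g1 := (b.1 1).isLt
  have g2 := (b.1 2).isLt; have g3 := (b.1 3).isLt
  have e0 : (a.1 0 : ℕ) = (b.1 0 : ℕ) := by omega
  have e1 : (a.1 1 : ℕ) = (b.1 1 : ℕ) := by omega
  have e2 : (a.1 2 : ℕ) = (b.1 2 : ℕ) := by omega
  have e3 : (a.1 3 : ℕ) = (b.1 3 : ℕ) := by omega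
  apply Subtype.ext; funext i
  fin_cases i
  exacts [Fin.ext e0, Fin.ext e1, Fin.ext e2, Fin.ext e3]

/-- key is monotone w.r.t. pointwise order -/
lemma key_le_of_pointwise {a b : Idx3} (h : ∀ j, (a.1 j : ℕ) ≤ (b.1 j : ℕ)) : key a ≤ key b := by
  have := h 0; have := h 1; have := h 2; have := h 3
  unfold key; omega

/-- the 1-variable change-of-basis coefficients -/
noncomputable def t (a : ℂ) : Fin 4 → Fin 4 → ℂ :=
  ![![1, 0, 0, 0],
    ![-a, 1, 0, 0],
    ![a^2 - a, 2 - 2*a, 1, 0],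
    ![-a^3 + 3*a^2 - 2*a, 3*a^2 - 9*a + 6, 6 - 3*a, 1]]

lemma t_diag (a : ℂ) (g : Fin 4) : t a g g = 1 := by
  fin_cases g <;> simp [t]

lemma t_zero (a : ℂ) {g g' : Fin 4} (h : (g : ℕ) < (g' : ℕ)) : t a g g' = 0 := by
  fin_cases g <;> fin_cases g' <;> simp_all [t]

lemma t_key (a y : ℂ) (g : Fin 4) :
    (∑ g' : Fin 4, t a g g' * ∏ i ∈ Finset.range (g' : ℕ), (y - (i : ℂ))) =
      ∏ i ∈ Finset.range (g : ℕ), (y - a + (i : ℂ)) := by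
  have v0 : ((0 : Fin 4) : ℕ) = 0 := rfl
  have v1 : ((1 : Fin 4) : ℕ) = 1 := rfl
  have v2 : ((2 : Fin 4) : ℕ) = 2 := rfl
  have v3 : ((3 : Fin 4) : ℕ) = 3 := rfl
  fin_cases g <;>
    simp [t, Fin.sum_univ_four, v0, v1, v2, v3, Finset.prod_range_succ] <;> ring

lemma cast_descFactorial (n g : ℕ) :
    ((n.descFactorial g : ℕ) : ℂ) = ∏ i ∈ Finset.range g, ((n : ℂ) - (i : ℂ)) := by
  induction g with
  | zero => simp
  | succ g ih =>
    rw [Nat.descFactorial_succ, Finset.prod_range_succ, ← ih]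
    by_cases h : g < n
    · push_cast [Nat.cast_sub h.le]
      ring
    · push_neg at h
      rcases h.eq_or_lt with rfl | hlt
      · simp [Nat.sub_self]
      · have hz : n.descFactorial g = 0 := Nat.descFactorial_eq_zero_iff_lt.mpr hlt
        simp [hz, Nat.sub_eq_zero_of_le h]

noncomputable def Mmat (ρ : Fin 4 → ℕ) : Matrix Idx3 Idx3 ℂ :=
  fun γ β => ∏ j, ((ρ j - (β.1 j : ℕ)).descFactorial (γ.1 j : ℕ) : ℂ)

noncomputable def Tmat (ρ : Fin 4 → ℕ) : Matrix Idx3 Idx3 ℂ :=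
  fun γ γ' => ∏ j, t (ρ j) (γ.1 j) (γ'.1 j)

noncomputable def Nmat : Matrix Idx3 Idx3 ℂ :=
  fun γ β => ∏ j, ∏ i ∈ Finset.range (γ.1 j : ℕ), ((i : ℂ) - ((β.1 j : ℕ) : ℂ))

lemma val_le_three (γ : Idx3) (j : Fin 4) : (γ.1 j : ℕ) ≤ 3 :=
  Nat.lt_succ_iff.mp (γ.1 j).isLt

lemma TM_eq_N (ρ : Fin 4 → ℕ) (hρ : ∀ j, 3 ≤ ρ j) : Tmat ρ * Mmat ρ = Nmat := by
  ext γ β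
  set F : (Fin 4 → Fin 4) → ℂ := fun g =>
    ∏ j, (t (ρ j) (γ.1 j) (g j) * ((ρ j - (β.1 j : ℕ)).descFactorial ((g j : ℕ)) : ℂ)) with hF
  have step1 : (Tmat ρ * Mmat ρ) γ β = ∑ γ' : Idx3, F γ'.1 := by
    simp only [Matrix.mul_apply, Tmat, Mmat, hF]
    exact Finset.sum_congr rfl fun γ' _ => (Finset.prod_mul_distrib).symm
  have step2 : (∑ γ' : Idx3, F γ'.1) =
      ∑ g ∈ Finset.univ.filter (fun g : Fin 4 → Fin 4 => (∑ i, (g i : ℕ)) ≤ 3), F g := by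
    exact (Finset.sum_subtype _ (by simp) F).symm
  have step3 : (∑ g ∈ Finset.univ.filter (fun g : Fin 4 → Fin 4 => (∑ i, (g i : ℕ)) ≤ 3), F g) =
      ∑ g : Fin 4 → Fin 4, F g := by
    refine Finset.sum_subset (Finset.filter_subset _ _) fun g _ hg => ?_
    rw [Finset.mem_filter] at hg
    push_neg at hg
    have hg' : 3 < ∑ i, (g i : ℕ) := hg (Finset.mem_univ g)
    obtain ⟨j, hj⟩ : ∃ j, (γ.1 j : ℕ) < (g j : ℕ) := by
      by_contra hc
      push_neg at hc
      exact absurd (le_trans (Finset.sum_le_sum fun i _ => hc i) γ.2) (not_le.mpr hg')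
    refine Finset.prod_eq_zero (Finset.mem_univ j) ?_
    rw [t_zero _ hj, zero_mul]
  have step4 : (∑ g : Fin 4 → Fin 4, F g) =
      ∏ j, ∑ x : Fin 4, t (ρ j) (γ.1 j) x * ((ρ j - (β.1 j : ℕ)).descFactorial ((x : ℕ)) : ℂ) := by
    rw [Finset.prod_univ_sum]
    rw [← Fintype.piFinset_univ]
  have step5 : ∀ j : Fin 4,
      (∑ x : Fin 4, t (ρ j) (γ.1 j) x * ((ρ j - (β.1 j : ℕ)).descFactorial ((x : ℕ)) : ℂ)) =
      ∏ i ∈ Finset.range (γ.1 j : ℕ), ((i : ℂ) - ((β.1 j : ℕ) : ℂ)) := by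
    intro j
    have hy : (((ρ j - (β.1 j : ℕ) : ℕ)) : ℂ) = ((ρ j : ℕ) : ℂ) - ((β.1 j : ℕ) : ℂ) := by
      rw [Nat.cast_sub (le_trans (val_le_three β j) (hρ j))]
    calc (∑ x : Fin 4, t (ρ j) (γ.1 j) x * ((ρ j - (β.1 j : ℕ)).descFactorial ((x : ℕ)) : ℂ))
        = ∑ x : Fin 4, t (ρ j) (γ.1 j) x *
            ∏ i ∈ Finset.range (x : ℕ), ((((ρ j - (β.1 j : ℕ) : ℕ)) : ℂ) - (i : ℂ)) := by
          exact Finset.sum_congr rfl fun x _ => by rw [cast_descFactorial]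
      _ = ∏ i ∈ Finset.range (γ.1 j : ℕ),
            ((((ρ j - (β.1 j : ℕ) : ℕ)) : ℂ) - ((ρ j : ℕ) : ℂ) + (i : ℂ)) := t_key _ _ _
      _ = ∏ i ∈ Finset.range (γ.1 j : ℕ), ((i : ℂ) - ((β.1 j : ℕ) : ℂ)) := by
          exact Finset.prod_congr rfl fun i _ => by rw [hy]; ring
  show (Tmat ρ * Mmat ρ) γ β = Nmat γ β
  rw [step1, step2, step3, step4]
  exact Finset.prod_congr rfl fun j _ => step5 j

lemma key_lt_256 (γ : Idx3) : key γ < 256 := by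
  have h0 := (γ.1 0).isLt; have h1 := (γ.1 1).isLt
  have h2 := (γ.1 2).isLt; have h3 := (γ.1 3).isLt
  unfold key; omega

lemma Nmat_zero {γ β : Idx3} (h : key β < key γ) : Nmat γ β = 0 := by
  obtain ⟨j, hj⟩ : ∃ j, (β.1 j : ℕ) < (γ.1 j : ℕ) := by
    by_contra hc
    push_neg at hc
    exact absurd (key_le_of_pointwise hc) (not_le.mpr h)
  refine Finset.prod_eq_zero (Finset.mem_univ j) ?_
  refine Finset.prod_eq_zero (Finset.mem_range.mpr hj) ?_
  simp

lemma Nmat_diag_ne (γ : Idx3) : Nmat γ γ ≠ 0 := by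
  unfold Nmat
  rw [Finset.prod_ne_zero_iff]
  intro j _
  rw [Finset.prod_ne_zero_iff]
  intro i hi
  rw [Finset.mem_range] at hi
  exact sub_ne_zero.mpr (by exact_mod_cast hi.ne)

open Matrix in
lemma Nmat_mulVec_eq_zero {u : Idx3 → ℂ} (hu : Nmat *ᵥ u = 0) : u = 0 := by
  have main : ∀ n : ℕ, ∀ γ : Idx3, 256 - key γ ≤ n → u γ = 0 := by
    intro n
    induction n with
    | zero =>
      intro γ hn
      exact absurd hn (by have := key_lt_256 γ; omega)
    | succ n ih =>
      intro γ hn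
      have h0 : (∑ β : Idx3, Nmat γ β * u β) = 0 := by
        have := congrFun hu γ
        simpa [Matrix.mulVec, dotProduct] using this
      have hsingle : (∑ β : Idx3, Nmat γ β * u β) = Nmat γ γ * u γ := by
        refine Finset.sum_eq_single γ (fun β _ hβ => ?_) (fun h => absurd (Finset.mem_univ γ) h)
        rcases lt_or_ge (key γ) (key β) with hlt | hle
        · have : u β = 0 := ih β (by omega)
          rw [this, mul_zero]
        · have hne : key β ≠ key γ := fun he => hβ (key_injective he)
          rw [Nmat_zero (lt_of_le_of_ne hle hne), zero_mul]
      rw [hsingle] at h0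
      exact (mul_eq_zero.mp h0).resolve_left (Nmat_diag_ne γ)
  funext γ
  exact main 256 γ (by omega)

open Matrix in
lemma Mmat_mulVec_injective (ρ : Fin 4 → ℕ) (hρ : ∀ j, 3 ≤ ρ j) :
    Function.Injective (fun v : Idx3 → ℂ => (Mmat ρ) *ᵥ v) := by
  intro v w hvw
  have h : (Mmat ρ) *ᵥ (v - w) = 0 := by
    rw [Matrix.mulVec_sub]
    simpa [sub_eq_zero] using hvw
  have hN : Nmat *ᵥ (v - w) = 0 := by
    rw [← TM_eq_N ρ hρ, ← Matrix.mulVec_mulVec, h, Matrix.mulVec_zero]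
  have := Nmat_mulVec_eq_zero hN
  rwa [sub_eq_zero] at this

open Matrix in
lemma Mmat_mulVec_bijective (ρ : Fin 4 → ℕ) (hρ : ∀ j, 3 ≤ ρ j) :
    Function.Bijective (fun v : Idx3 → ℂ => (Mmat ρ) *ᵥ v) := by
  have hinj := Mmat_mulVec_injective ρ hρ
  have : Function.Injective (Mmat ρ).mulVecLin := by
    intro v w h
    exact hinj (by simpa [Matrix.mulVecLin_apply] using h)
  have hsurj := (LinearMap.injective_iff_surjective (f := (Mmat ρ).mulVecLin)).mp this
  exact ⟨hinj, fun c => by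
    obtain ⟨v, hv⟩ := hsurj c
    exact ⟨v, by simpa [Matrix.mulVecLin_apply] using hv⟩⟩

end Stmt10Aux

open Stmt10Aux Matrix in
/-- The 35×35 linear system in the unknowns `(v_β)_{|β|≤3}` whose equation indexed by `γ`
(`|γ| ≤ 3`) has coefficient `∏ⱼ (ρⱼ-βⱼ)(ρⱼ-βⱼ-1)⋯(ρⱼ-βⱼ-γⱼ+1)` on `v_β` — the value of
`∂^γ z^{ρ-β}` at `(1,1,1,1)` — has a unique solution for every right-hand side `(c_γ)`,
provided every component of `ρ` is at least 3. -/
theorem stmt10 (ρ : Fin 4 → ℕ) (hρ : ∀ j, 3 ≤ ρ j) (c : Idx3 → ℂ) :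
    ∃! v : Idx3 → ℂ, ∀ γ : Idx3,
      (∑ β : Idx3, (∏ j, ((ρ j - (β.1 j : ℕ)).descFactorial (γ.1 j : ℕ) : ℂ)) * v β) = c γ := by
  obtain ⟨hinj, hsurj⟩ := Mmat_mulVec_bijective ρ hρ
  obtain ⟨v, hv⟩ := hsurj c
  have hmv : ∀ w : Idx3 → ℂ, ∀ γ : Idx3,
      ((Mmat ρ) *ᵥ w) γ = ∑ β : Idx3, (∏ j, ((ρ j - (β.1 j : ℕ)).descFactorial (γ.1 j : ℕ) : ℂ)) * w β := by
    intro w γ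
    simp [Matrix.mulVec, dotProduct, Mmat]
  have hv' : (Mmat ρ) *ᵥ v = c := hv
  refine ⟨v, fun γ => by rw [← hmv, hv'], fun w hw => ?_⟩
  refine hinj ?_
  show (Mmat ρ) *ᵥ w = (Mmat ρ) *ᵥ v
  rw [hv']
  exact funext fun γ => (hmv w γ).trans (hw γ)
end
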